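/- arXiv:2210.09868 — 7 statements merged into one kernel-verified Lean document; each statement's English description precedes it below -/
import Mathlib

section
/- Let f : 2^V → ℝ be a normalized, monotone set function on a finite ground set V, let α ∈ [0,1] be a generalized curvature bound for f and β ∈ [0,1] an inverse generalized curvature bound for f, and let η ≥ 1. Suppose x = (x_1,…,x_N) is an η-optimal greedy joint solution for the pairwise-disjoint choice sets X_1,…,X_N, and x* = (x*_1,…,x*_N) is any joint solution with x*_i ∈ X_i for each i. Then (1−β)·f({x*_1,…,x*_N}) ≤ (η + (1−β)·α)·f({x_1,…,x_N}). In particular, if x* maximizes f over joint solutions and f({x*_1,…,x*_N}) > 0, then f(x)/f(x*) ≥ (1−β)/(η + (1−β)·α). -/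
/-- The marginal reward of `S` given `Q`: `Δ(S|Q) = f(S ∪ Q) − f(Q)`. -/
def marg {V : Type*} [DecidableEq V] (f : Finset V → ℝ) (S Q : Finset V) : ℝ :=
  f (S ∪ Q) - f Q

/-- Image of the first `n` indices under `x`. -/
def prefImg {V : Type*} [DecidableEq V] {N : ℕ} (x : Fin N → V) (n : ℕ) : Finset V :=
  (Finset.univ.filter (fun i : Fin N => (i : ℕ) < n)).image x

lemma prefImg_zero {V : Type*} [DecidableEq V] {N : ℕ} (x : Fin N → V) :
    prefImg x 0 = ∅ := by
  simp [prefImg]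

lemma prefImg_top {V : Type*} [DecidableEq V] {N : ℕ} (x : Fin N → V) :
    prefImg x N = Finset.univ.image x := by
  have h : (Finset.univ.filter (fun i : Fin N => (i : ℕ) < N)) = Finset.univ :=
    Finset.filter_true_of_mem (fun i _ => i.isLt)
  rw [prefImg, h]

lemma prefImg_succ {V : Type*} [DecidableEq V] {N : ℕ} (x : Fin N → V) (n : ℕ) (h : n < N) :
    prefImg x (n + 1) = insert (x ⟨n, h⟩) (prefImg x n) := by
  ext v
  simp only [prefImg, Finset.mem_image, Finset.mem_filter, Finset.mem_univ, true_and,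
    Finset.mem_insert]
  constructor
  · rintro ⟨j, hj, rfl⟩
    rcases Nat.lt_succ_iff_lt_or_eq.mp hj with hj' | hj'
    · exact Or.inr ⟨j, hj', rfl⟩
    · left; have : j = ⟨n, h⟩ := Fin.ext hj'
      rw [this]
  · rintro (rfl | ⟨j, hj, rfl⟩)
    · exact ⟨⟨n, h⟩, Nat.lt_succ_self n, rfl⟩
    · exact ⟨j, Nat.lt_succ_of_lt hj, rfl⟩

lemma prefImg_mono {V : Type*} [DecidableEq V] {N : ℕ} (x : Fin N → V) {m n : ℕ}
    (h : m ≤ n) : prefImg x m ⊆ prefImg x n := by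
  intro v hv
  simp only [prefImg, Finset.mem_image, Finset.mem_filter, Finset.mem_univ, true_and] at hv ⊢
  obtain ⟨j, hj, rfl⟩ := hv
  exact ⟨j, lt_of_lt_of_le hj h, rfl⟩

lemma prefImg_Iio {V : Type*} [DecidableEq V] {N : ℕ} (x : Fin N → V) (i : Fin N) :
    (Finset.Iio i).image x = prefImg x i.val := by
  ext v
  simp only [prefImg, Finset.mem_image, Finset.mem_Iio, Finset.mem_filter, Finset.mem_univ,
    true_and, Fin.lt_def]
/-- **Theorem 1 (greedy bound, full information).**
Given a normalized monotone set function `f` with generalized curvature bound `α ∈ [0,1]`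
and inverse generalized curvature bound `β ∈ [0,1]`, an `η`-optimal greedy joint solution
`x` for pairwise disjoint choice sets `X i`, and any joint solution `xs`, we have
`(1−β)·f(xs) ≤ (η + (1−β)α)·f(x)`; in particular if `xs` is optimal with `f(xs) > 0`
then `f(x)/f(xs) ≥ (1−β)/(η + (1−β)α)`. -/
theorem greedy_bound
    {V : Type*} [DecidableEq V] [Fintype V] {N : ℕ}
    (f : Finset V → ℝ)
    (hnorm : f ∅ = 0)
    (hmono : ∀ S Q : Finset V, S ⊆ Q → f S ≤ f Q)
    (α β η : ℝ) (hα0 : 0 ≤ α) (hα1 : α ≤ 1) (hβ0 : 0 ≤ β) (hβ1 : β ≤ 1)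
    (hη : 1 ≤ η)
    (hcurv : ∀ (S Q : Finset V) (v : V), v ∈ S \ Q →
      marg f {v} ((S ∪ Q).erase v) ≥ (1 - α) * marg f {v} (S.erase v))
    (hinv : ∀ (S Q : Finset V) (v : V), v ∈ S \ Q →
      marg f {v} (S.erase v) ≥ (1 - β) * marg f {v} ((S.erase v) ∪ Q))
    (X : Fin N → Finset V)
    (hXne : ∀ i, (X i).Nonempty)
    (hXdisj : ∀ i j, i ≠ j → Disjoint (X i) (X j))
    (x xs : Fin N → V)
    (hx : ∀ i, x i ∈ X i) (hxs : ∀ i, xs i ∈ X i)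
    (hgreedy : ∀ i : Fin N, ∀ xhat ∈ X i,
      η * marg f {x i} ((Finset.Iio i).image x) ≥ marg f {xhat} ((Finset.Iio i).image x)) :
    (1 - β) * f (Finset.univ.image xs) ≤ (η + (1 - β) * α) * f (Finset.univ.image x) ∧
    ((∀ x' : Fin N → V, (∀ i, x' i ∈ X i) →
        f (Finset.univ.image x') ≤ f (Finset.univ.image xs)) →
      0 < f (Finset.univ.image xs) →
      (1 - β) / (η + (1 - β) * α) ≤ f (Finset.univ.image x) / f (Finset.univ.image xs)) := by
  classical
  -- distinct choice sets give distinct elements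
  have hdiff : ∀ (u v : Fin N), u ≠ v → ∀ a ∈ X u, ∀ b ∈ X v, a ≠ b := by
    intro u v huv a ha b hb hab
    exact Finset.disjoint_left.mp (hXdisj u v huv) ha (hab ▸ hb)
  have hm0 : ∀ (v : V) (S : Finset V), 0 ≤ marg f {v} S := by
    intro v S
    exact sub_nonneg.mpr (hmono _ _ Finset.subset_union_right)
  have hxPx : ∀ (i : Fin N) (m : ℕ), m ≤ i.val → x i ∉ prefImg x m := by
    intro i m hmi hmem
    simp only [prefImg, Finset.mem_image, Finset.mem_filter, Finset.mem_univ, true_and] at hmem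
    obtain ⟨j, hj, hjx⟩ := hmem
    have hji : j ≠ i := by
      intro h; subst h; omega
    exact hdiff j i hji _ (hx j) _ (hx i) hjx
  have hxsOx : ∀ (i : Fin N) (m : ℕ), m ≤ i.val → xs i ∉ prefImg xs m := by
    intro i m hmi hmem
    simp only [prefImg, Finset.mem_image, Finset.mem_filter, Finset.mem_univ, true_and] at hmem
    obtain ⟨j, hj, hjx⟩ := hmem
    have hji : j ≠ i := by
      intro h; subst h; omega
    exact hdiff j i hji _ (hxs j) _ (hxs i) hjx
  have hxs_not_Px : ∀ (i : Fin N) (m : ℕ), xs i ≠ x i → xs i ∉ prefImg x m := by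
    intro i m hne hmem
    simp only [prefImg, Finset.mem_image, Finset.mem_filter, Finset.mem_univ, true_and] at hmem
    obtain ⟨j, hj, hjx⟩ := hmem
    by_cases hji : j = i
    · subst hji; exact hne hjx.symm
    · exact hdiff j i hji _ (hx j) _ (hxs i) hjx
  have hx_not_Ox : ∀ (i : Fin N) (m : ℕ), x i ≠ xs i → x i ∉ prefImg xs m := by
    intro i m hne hmem
    simp only [prefImg, Finset.mem_image, Finset.mem_filter, Finset.mem_univ, true_and] at hmem
    obtain ⟨j, hj, hjx⟩ := hmem
    by_cases hji : j = i
    · subst hji; exact hne hjx.symm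
    · exact hdiff j i hji _ (hxs j) _ (hx i) hjx
  -- the main inductive inequality
  have key : ∀ n, n ≤ N →
      (1 - β) * f (prefImg x N ∪ prefImg xs n) + (1 - β) * (1 - α) * f (prefImg x n)
        ≤ (1 - β) * f (prefImg x N) + η * f (prefImg x n)
          + (1 - β) * (f (prefImg xs N ∪ prefImg x n) - f (prefImg xs N)) := by
    intro n
    induction n with
    | zero =>
      intro _
      simp only [prefImg_zero, Finset.union_empty, hnorm]
      exact le_of_eq (by ring)
    | succ n ih =>
      intro hn1
      have hn : n < N := Nat.lt_of_succ_le hn1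
      have ihn := ih (le_of_lt hn)
      set i : Fin N := ⟨n, hn⟩ with hi
      have hivn : (i : ℕ) = n := rfl
      have e1 : prefImg xs (n + 1) = insert (xs i) (prefImg xs n) := prefImg_succ xs n hn
      have e2 : prefImg x (n + 1) = insert (x i) (prefImg x n) := prefImg_succ x n hn
      have t1 : f (prefImg x N ∪ prefImg xs (n + 1)) =
          marg f {xs i} (prefImg x N ∪ prefImg xs n) + f (prefImg x N ∪ prefImg xs n) := by
        rw [e1, Finset.union_insert, marg, ← Finset.insert_eq]; ring
      have t2 : f (prefImg xs N ∪ prefImg x (n + 1)) =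
          marg f {x i} (prefImg xs N ∪ prefImg x n) + f (prefImg xs N ∪ prefImg x n) := by
        rw [e2, Finset.union_insert, marg, ← Finset.insert_eq]; ring
      have t3 : f (prefImg x (n + 1)) = marg f {x i} (prefImg x n) + f (prefImg x n) := by
        rw [e2, marg, ← Finset.insert_eq]; ring
      have T0 : 0 ≤ marg f {x i} (prefImg x n) := hm0 _ _
      have hinc : (1 - β) * marg f {xs i} (prefImg x N ∪ prefImg xs n)
          + (1 - β) * (1 - α) * marg f {x i} (prefImg x n)
          ≤ η * marg f {x i} (prefImg x n)
            + (1 - β) * marg f {x i} (prefImg xs N ∪ prefImg x n) := by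
        have hd2 : 0 ≤ marg f {x i} (prefImg xs N ∪ prefImg x n) := hm0 _ _
        by_cases hcase : xs i = x i
        · have hximem : xs i ∈ prefImg x N ∪ prefImg xs n := by
            rw [hcase]
            exact Finset.mem_union_left _
              (Finset.mem_image_of_mem x (Finset.mem_filter.mpr ⟨Finset.mem_univ i, i.isLt⟩))
          have hd1 : marg f {xs i} (prefImg x N ∪ prefImg xs n) = 0 := by
            rw [marg, ← Finset.insert_eq, Finset.insert_eq_self.mpr hximem, sub_self]
          have hco : (1 - β) * (1 - α) * marg f {x i} (prefImg x n)
              ≤ η * marg f {x i} (prefImg x n) := by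
            apply mul_le_mul_of_nonneg_right _ T0
            nlinarith
          have hd2' : 0 ≤ (1 - β) * marg f {x i} (prefImg xs N ∪ prefImg x n) :=
            mul_nonneg (by linarith) hd2
          rw [hd1]
          linarith
        · -- inverse curvature + greedy bound the xs-marginal
          have hxsPxN : xs i ∉ prefImg x N := hxs_not_Px i N hcase
          have hxsPxn : xs i ∉ prefImg x n := hxs_not_Px i n hcase
          have hxsOxn : xs i ∉ prefImg xs n := hxsOx i n (le_of_eq hivn.symm)
          have hmemS : xs i ∈ insert (xs i) (prefImg x n) \ (prefImg x N ∪ prefImg xs n) := by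
            rw [Finset.mem_sdiff, Finset.mem_union]
            exact ⟨Finset.mem_insert_self _ _, fun h => h.elim hxsPxN hxsOxn⟩
          have happ := hinv (insert (xs i) (prefImg x n)) (prefImg x N ∪ prefImg xs n)
            (xs i) hmemS
          rw [Finset.erase_insert hxsPxn] at happ
          have hun : prefImg x n ∪ (prefImg x N ∪ prefImg xs n)
              = prefImg x N ∪ prefImg xs n := by
            rw [← Finset.union_assoc,
              Finset.union_eq_right.mpr (prefImg_mono x (le_of_lt hn))]
          rw [hun] at happ
          have hgr : marg f {xs i} (prefImg x n) ≤ η * marg f {x i} (prefImg x n) := by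
            have h := hgreedy i (xs i) (hxs i)
            rwa [prefImg_Iio] at h
          -- curvature bounds the x-marginal from below
          have hxOxN : x i ∉ prefImg xs N := hx_not_Ox i N (fun h => hcase h.symm)
          have hxPxn : x i ∉ prefImg x n := hxPx i n (le_of_eq hivn.symm)
          have hmemS2 : x i ∈ insert (x i) (prefImg x n) \ (prefImg xs N ∪ prefImg x n) := by
            rw [Finset.mem_sdiff, Finset.mem_union]
            exact ⟨Finset.mem_insert_self _ _, fun h => h.elim hxOxN hxPxn⟩
          have happ2 := hcurv (insert (x i) (prefImg x n)) (prefImg xs N ∪ prefImg x n)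
            (x i) hmemS2
          have hSQ : (insert (x i) (prefImg x n) ∪ (prefImg xs N ∪ prefImg x n)).erase (x i)
              = prefImg xs N ∪ prefImg x n := by
            rw [Finset.insert_union, Finset.erase_insert]
            · rw [← Finset.union_assoc, Finset.union_comm (prefImg x n) (prefImg xs N),
                Finset.union_assoc, Finset.union_self]
            · rw [← Finset.union_assoc, Finset.union_comm (prefImg x n) (prefImg xs N),
                Finset.union_assoc, Finset.union_self, Finset.mem_union]
              exact fun h => h.elim hxOxN hxPxn
          rw [hSQ, Finset.erase_insert hxPxn] at happ2
          have hc2 : (1 - β) * ((1 - α) * marg f {x i} (prefImg x n))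
              ≤ (1 - β) * marg f {x i} (prefImg xs N ∪ prefImg x n) :=
            mul_le_mul_of_nonneg_left happ2 (by linarith)
          have hc1 : (1 - β) * marg f {xs i} (prefImg x N ∪ prefImg xs n)
              ≤ marg f {xs i} (prefImg x n) := happ
          nlinarith [hc1, hc2, hgr]
      rw [t1, t2, t3]
      linarith
  have keyN := key N (le_refl N)
  rw [prefImg_top, prefImg_top, Finset.union_comm (Finset.univ.image x) (Finset.univ.image xs)]
    at keyN
  have main : (1 - β) * f (Finset.univ.image xs)
      ≤ (η + (1 - β) * α) * f (Finset.univ.image x) := by nlinarith [keyN]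
  refine ⟨main, ?_⟩
  intro _ hpos
  have hc : 0 < η + (1 - β) * α := by nlinarith [mul_nonneg (by linarith : (0:ℝ) ≤ 1 - β) hα0]
  rw [div_le_div_iff₀ hc hpos]
  nlinarith [main]
end

section
/- Let f : 2^V → ℝ be a normalized, monotone set function on a finite ground set V, let α ∈ [0,1] be a generalized curvature bound for f and β ∈ [0,1] an inverse generalized curvature bound for f, and let η ≥ 1. Suppose x = (x_1,…,x_N) is an η-optimal limited-information greedy joint solution with information sets N_1,…,N_N, and x* = (x*_1,…,x*_N) is any joint solution with x*_i ∈ X_i for each i. Then for every fractional clique cover {y_c} of the communication graph, (1−β)²·f({x*_1,…,x*_N}) ≤ ((1−β)² + (α + η − 1 + β − α·β)·Σ_c y_c)·f({x_1,…,x_N}); in particular, if x* maximizes f over joint solutions and f(x*) > 0, then f(x)/f(x*) ≥ (1−β)²/((1−β)² + (α + η − 1 + β − α·β)·Σ_c y_c). -/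
/-- A set `c` of agents is a clique of the communication graph with information sets `𝒩`
if for all `i, j ∈ c` with `j < i` we have `j ∈ 𝒩 i`. -/
def IsCommClique {N : ℕ} (𝒩 : Fin N → Finset (Fin N)) (c : Finset (Fin N)) : Prop :=
  ∀ i ∈ c, ∀ j ∈ c, j < i → j ∈ 𝒩 i

/-- **Theorem 2 (greedy bound with limited information).**
Given a normalized monotone set function `f` with generalized curvature bound `α ∈ [0,1]`
and inverse generalized curvature bound `β ∈ [0,1]`, an `η`-optimal limited-information
greedy joint solution `x` with information sets `𝒩 i ⊆ {j : j < i}`, any joint solution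
`xs`, and any fractional clique cover `y` of the communication graph, we have
`(1−β)²·f(xs) ≤ ((1−β)² + (α + η − 1 + β − αβ)·Σ_c y_c)·f(x)`; in particular if `xs`
is optimal with `f(xs) > 0` then
`f(x)/f(xs) ≥ (1−β)²/((1−β)² + (α + η − 1 + β − αβ)·Σ_c y_c)`. -/
theorem limited_information_greedy_bound
    {V : Type*} [DecidableEq V] [Fintype V] {N : ℕ}
    (f : Finset V → ℝ)
    (hnorm : f ∅ = 0)
    (hmono : ∀ S Q : Finset V, S ⊆ Q → f S ≤ f Q)
    (α β η : ℝ) (hα0 : 0 ≤ α) (hα1 : α ≤ 1) (hβ0 : 0 ≤ β) (hβ1 : β ≤ 1)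
    (hη : 1 ≤ η)
    (hcurv : ∀ (S Q : Finset V) (v : V), v ∈ S \ Q →
      marg f {v} ((S ∪ Q).erase v) ≥ (1 - α) * marg f {v} (S.erase v))
    (hinv : ∀ (S Q : Finset V) (v : V), v ∈ S \ Q →
      marg f {v} (S.erase v) ≥ (1 - β) * marg f {v} ((S.erase v) ∪ Q))
    (X : Fin N → Finset V)
    (hXne : ∀ i, (X i).Nonempty)
    (hXdisj : ∀ i j, i ≠ j → Disjoint (X i) (X j))
    (𝒩 : Fin N → Finset (Fin N))
    (h𝒩 : ∀ i : Fin N, ∀ j ∈ 𝒩 i, j < i)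
    (x xs : Fin N → V)
    (hx : ∀ i, x i ∈ X i) (hxs : ∀ i, xs i ∈ X i)
    (hgreedy : ∀ i : Fin N, ∀ xhat ∈ X i,
      η * marg f {x i} ((𝒩 i).image x) ≥ marg f {xhat} ((𝒩 i).image x))
    (y : Finset (Fin N) → ℝ)
    (hy0 : ∀ c, 0 ≤ y c)
    (hyclique : ∀ c, ¬ IsCommClique 𝒩 c → y c = 0)
    (hycover : ∀ i : Fin N, 1 ≤ ∑ c ∈ Finset.univ.filter (fun c => i ∈ c), y c) :
    (1 - β) ^ 2 * f (Finset.univ.image xs) ≤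
      ((1 - β) ^ 2 + (α + η - 1 + β - α * β) * ∑ c : Finset (Fin N), y c) *
        f (Finset.univ.image x) ∧
    ((∀ x' : Fin N → V, (∀ i, x' i ∈ X i) →
        f (Finset.univ.image x') ≤ f (Finset.univ.image xs)) →
      0 < f (Finset.univ.image xs) →
      (1 - β) ^ 2 / ((1 - β) ^ 2 + (α + η - 1 + β - α * β) * ∑ c : Finset (Fin N), y c) ≤
        f (Finset.univ.image x) / f (Finset.univ.image xs)) := by
  classical
  set A := Finset.univ.image x with hAdef
  set B := Finset.univ.image xs with hBdef
  have hβ' : (0:ℝ) ≤ 1 - β := by linarith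
  have hα' : (0:ℝ) ≤ 1 - α := by linarith
  have hη0 : (0:ℝ) ≤ η := by linarith
  have hf0 : ∀ Q : Finset V, 0 ≤ f Q := by
    intro Q; rw [← hnorm]; exact hmono ∅ Q (Finset.empty_subset Q)
  have hmargnn : ∀ (v : V) (Q : Finset V), 0 ≤ marg f {v} Q := by
    intro v Q
    have := hmono Q ({v} ∪ Q) Finset.subset_union_right
    simp only [marg]; linarith
  have hxinj : ∀ i j : Fin N, x i = x j → i = j := by
    intro i j h
    by_contra hne
    exact Finset.disjoint_left.mp (hXdisj i j hne) (hx i) (h ▸ hx j)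
  have hxsx : ∀ i j : Fin N, xs i = x j → i = j := by
    intro i j h
    by_contra hne
    exact Finset.disjoint_left.mp (hXdisj i j hne) (hxs i) (h ▸ hx j)
  -- reformulated curvature inequalities
  have key_inv : ∀ (v : V) (T Q : Finset V), v ∉ T → v ∉ Q →
      (1 - β) * marg f {v} (T ∪ Q) ≤ marg f {v} T := by
    intro v T Q hvT hvQ
    have h := hinv (insert v T) Q v (Finset.mem_sdiff.mpr ⟨Finset.mem_insert_self v T, hvQ⟩)
    rwa [Finset.erase_insert hvT] at h
  have key_curv : ∀ (v : V) (T Q : Finset V), v ∉ T → v ∉ Q →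
      (1 - α) * marg f {v} T ≤ marg f {v} (T ∪ Q) := by
    intro v T Q hvT hvQ
    have h := hcurv (insert v T) Q v (Finset.mem_sdiff.mpr ⟨Finset.mem_insert_self v T, hvQ⟩)
    rw [Finset.erase_insert hvT, Finset.insert_union,
      Finset.erase_insert (fun hm => (Finset.mem_union.mp hm).elim hvT hvQ)] at h
    exact h
  have hnotimg : ∀ (g : Fin N → V), (∀ i j : Fin N, g i = g j → i = j) →
      ∀ (s : Finset (Fin N)) (j : Fin N), (∀ i ∈ s, i ≠ j) → g j ∉ s.image g := by
    intro g hg s j hs h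
    obtain ⟨i, hi, hij⟩ := Finset.mem_image.mp h
    exact hs i hi (hg i j hij)
  have hxP : ∀ i : Fin N, x i ∉ (𝒩 i).image x := by
    intro i
    refine hnotimg x hxinj _ i fun j hj he => ?_
    have := h𝒩 i j hj
    rw [he] at this
    exact lt_irrefl i this
  have hxsP : ∀ i : Fin N, xs i ∉ (𝒩 i).image x := by
    intro i h
    obtain ⟨j, hj, hji⟩ := Finset.mem_image.mp h
    have hq := h𝒩 i j hj
    rw [← hxsx i j hji.symm] at hq
    exact lt_irrefl i hq
  have hPA : ∀ i : Fin N, (𝒩 i).image x ⊆ A := by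
    intro i
    rw [hAdef]
    exact Finset.image_subset_image (Finset.subset_univ _)
  -- the prefix sets
  set Fk : ℕ → Finset (Fin N) := fun k => Finset.univ.filter (fun i => (i : ℕ) < k) with hFkdef
  have hFmem : ∀ (k : ℕ) (i : Fin N), i ∈ Fk k ↔ (i : ℕ) < k := by
    intro k i; simp [hFkdef]
  have hFkN : Fk N = Finset.univ := by
    ext i; simp [hFkdef, i.isLt]
  have hFk0 : Fk 0 = ∅ := by
    ext i; simp [hFkdef]
  have hFstep : ∀ (k : ℕ) (hk : k < N), Fk (k+1) = insert ⟨k, hk⟩ (Fk k) := by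
    intro k hk
    ext i
    simp only [hFkdef, Finset.mem_filter, Finset.mem_univ, true_and, Finset.mem_insert,
      Fin.ext_iff]
    omega
  have hknot : ∀ (k : ℕ) (hk : k < N), (⟨k, hk⟩ : Fin N) ∉ Fk k := by
    intro k hk; simp [hFkdef]
  have hFk_ne : ∀ (k : ℕ) (hk : k < N), ∀ i ∈ Fk k, i ≠ (⟨k, hk⟩ : Fin N) := by
    intro k hk i hi he
    rw [hFmem] at hi
    rw [he] at hi
    exact lt_irrefl k hi
  have hNsub : ∀ (k : ℕ) (hk : k < N), 𝒩 ⟨k, hk⟩ ⊆ Fk k := by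
    intro k hk i hi
    rw [hFmem]
    exact h𝒩 ⟨k, hk⟩ i hi
  -- Chain 1
  have chain1 : ∀ k, k ≤ N →
      (1 - β) * (f (A ∪ (Fk k).image xs) - f A) ≤
        η * ∑ i ∈ Fk k, (if xs i ∈ A then 0 else marg f {x i} ((𝒩 i).image x)) := by
    intro k
    induction k with
    | zero =>
        intro _
        simp [hFk0]
    | succ k ih =>
        intro hk1
        have hk : k < N := hk1
        have ihk := ih (Nat.le_of_lt hk)
        rw [hFstep k hk, Finset.sum_insert (hknot k hk), Finset.image_insert]
        set j : Fin N := ⟨k, hk⟩ with hjdef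
        by_cases hmem : xs j ∈ A ∪ (Fk k).image xs
        · have heq : A ∪ insert (xs j) ((Fk k).image xs) = A ∪ (Fk k).image xs := by
            rw [Finset.union_insert, Finset.insert_eq_self.mpr hmem]
          rw [heq]
          have hnn : (0:ℝ) ≤ (if xs j ∈ A then 0 else marg f {x j} ((𝒩 j).image x)) := by
            split
            · exact le_refl _
            · exact hmargnn _ _
          have := mul_nonneg hη0 hnn
          linarith
        · have hxsA : xs j ∉ A := fun h => hmem (Finset.mem_union_left _ h)
          rw [if_neg hxsA]
          have h1 : (1 - β) * marg f {xs j} (((𝒩 j).image x) ∪ (A ∪ (Fk k).image xs)) ≤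
              marg f {xs j} ((𝒩 j).image x) :=
            key_inv (xs j) _ _ (hxsP j) hmem
          have habs : ((𝒩 j).image x) ∪ (A ∪ (Fk k).image xs) = A ∪ (Fk k).image xs :=
            Finset.union_eq_right.mpr ((hPA j).trans Finset.subset_union_left)
          rw [habs] at h1
          have h2 := hgreedy j (xs j) (hxs j)
          have h3 : f (A ∪ insert (xs j) ((Fk k).image xs)) =
              marg f {xs j} (A ∪ (Fk k).image xs) + f (A ∪ (Fk k).image xs) := by
            rw [Finset.union_insert, marg, ← Finset.insert_eq]; ring
          rw [h3]
          linarith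
  -- Chain 2
  have chain2 : ∀ k, k ≤ N →
      f B + (1 - α) * ∑ i ∈ Fk k, (if x i ∈ B then 0 else marg f {x i} ((𝒩 i).image x)) ≤
        f (B ∪ (Fk k).image x) := by
    intro k
    induction k with
    | zero =>
        intro _
        simp [hFk0]
    | succ k ih =>
        intro hk1
        have hk : k < N := hk1
        have ihk := ih (Nat.le_of_lt hk)
        rw [hFstep k hk, Finset.sum_insert (hknot k hk), Finset.image_insert,
          Finset.union_insert]
        set j : Fin N := ⟨k, hk⟩ with hjdef
        by_cases hmem : x j ∈ B
        · rw [if_pos hmem,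
            Finset.insert_eq_self.mpr (Finset.mem_union_left _ hmem)]
          linarith
        · rw [if_neg hmem]
          have hxnotB : x j ∉ B ∪ (Fk k).image x := by
            intro h
            rcases Finset.mem_union.mp h with h | h
            · exact hmem h
            · exact hnotimg x hxinj (Fk k) j (hFk_ne k hk) h
          have h1 : (1 - α) * marg f {x j} ((𝒩 j).image x) ≤
              marg f {x j} (((𝒩 j).image x) ∪ (B ∪ (Fk k).image x)) :=
            key_curv (x j) _ _ (hxP j) hxnotB
          have habs : ((𝒩 j).image x) ∪ (B ∪ (Fk k).image x) = B ∪ (Fk k).image x := by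
            refine Finset.union_eq_right.mpr ?_
            exact (Finset.image_subset_image (hNsub k hk)).trans Finset.subset_union_right
          rw [habs] at h1
          have h3 : f (insert (x j) (B ∪ (Fk k).image x)) =
              marg f {x j} (B ∪ (Fk k).image x) + f (B ∪ (Fk k).image x) := by
            rw [marg, ← Finset.insert_eq]; ring
          rw [h3]
          linarith
  -- Chain 3 : cliques
  have chain3 : ∀ c : Finset (Fin N), IsCommClique 𝒩 c → ∀ k, k ≤ N →
      (1 - β) * ∑ i ∈ c ∩ Fk k, marg f {x i} ((𝒩 i).image x) ≤ f ((c ∩ Fk k).image x) := by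
    intro c hc k
    induction k with
    | zero =>
        intro _
        simp [hFk0, hnorm]
    | succ k ih =>
        intro hk1
        have hk : k < N := hk1
        have ihk := ih (Nat.le_of_lt hk)
        set j : Fin N := ⟨k, hk⟩ with hjdef
        by_cases hjc : j ∈ c
        · have hstep : c ∩ Fk (k+1) = insert j (c ∩ Fk k) := by
            rw [hFstep k hk]
            ext i
            simp only [Finset.mem_inter, Finset.mem_insert]
            constructor
            · rintro ⟨hic, hi | hi⟩
              · exact Or.inl hi
              · exact Or.inr ⟨hic, hi⟩
            · rintro (rfl | ⟨hic, hi⟩)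
              · exact ⟨hjc, Or.inl rfl⟩
              · exact ⟨hic, Or.inr hi⟩
          have hjnot : j ∉ c ∩ Fk k := fun h => hknot k hk (Finset.mem_inter.mp h).2
          rw [hstep, Finset.sum_insert hjnot, Finset.image_insert]
          have hxnot : x j ∉ (c ∩ Fk k).image x :=
            hnotimg x hxinj _ j (fun i hi => hFk_ne k hk i (Finset.mem_inter.mp hi).2)
          have hcsub : (c ∩ Fk k).image x ⊆ (𝒩 j).image x := by
            apply Finset.image_subset_image
            intro i hi
            obtain ⟨hic, hik⟩ := Finset.mem_inter.mp hi
            refine hc j hjc i hic ?_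
            rw [hFmem] at hik
            exact hik
          have h1 : (1 - β) * marg f {x j} (((c ∩ Fk k).image x) ∪ ((𝒩 j).image x)) ≤
              marg f {x j} ((c ∩ Fk k).image x) :=
            key_inv (x j) _ _ hxnot (hxP j)
          have habs : ((c ∩ Fk k).image x) ∪ ((𝒩 j).image x) = (𝒩 j).image x :=
            Finset.union_eq_right.mpr hcsub
          rw [habs] at h1
          have h3 : f (insert (x j) ((c ∩ Fk k).image x)) =
              marg f {x j} ((c ∩ Fk k).image x) + f ((c ∩ Fk k).image x) := by
            rw [marg, ← Finset.insert_eq]; ring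
          rw [h3]
          linarith
        · have hstep : c ∩ Fk (k+1) = c ∩ Fk k := by
            rw [hFstep k hk]
            ext i
            simp only [Finset.mem_inter, Finset.mem_insert]
            constructor
            · rintro ⟨hic, rfl | hi⟩
              · exact absurd hic hjc
              · exact ⟨hic, hi⟩
            · rintro ⟨hic, hi⟩
              exact ⟨hic, Or.inr hi⟩
          rw [hstep]
          exact ihk
  have hcliqueA : ∀ c : Finset (Fin N), IsCommClique 𝒩 c →
      (1 - β) * ∑ i ∈ c, marg f {x i} ((𝒩 i).image x) ≤ f A := by
    intro c hc
    have h := chain3 c hc N (le_refl N)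
    rw [hFkN, Finset.inter_univ] at h
    refine h.trans (hmono _ _ ?_)
    rw [hAdef]
    exact Finset.image_subset_image (Finset.subset_univ c)
  -- cover inequality
  have hY0 : (0:ℝ) ≤ ∑ c : Finset (Fin N), y c := Finset.sum_nonneg fun c _ => hy0 c
  have hγ0 : (0:ℝ) ≤ α + η - 1 + β - α * β := by
    nlinarith [mul_le_one₀ (by linarith : (1:ℝ) - α ≤ 1) hβ' (by linarith : (1:ℝ) - β ≤ 1)]
  have hcov : (1 - β) * ∑ i : Fin N, marg f {x i} ((𝒩 i).image x) ≤
      (∑ c : Finset (Fin N), y c) * f A := by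
    have h1 : (1 - β) * ∑ i : Fin N, marg f {x i} ((𝒩 i).image x) ≤
        ∑ i : Fin N, ∑ c ∈ Finset.univ.filter (fun c => i ∈ c),
          y c * ((1 - β) * marg f {x i} ((𝒩 i).image x)) := by
      rw [Finset.mul_sum]
      refine Finset.sum_le_sum fun i _ => ?_
      rw [← Finset.sum_mul]
      exact le_mul_of_one_le_left (mul_nonneg hβ' (hmargnn _ _)) (hycover i)
    have h2 : ∑ i : Fin N, ∑ c ∈ Finset.univ.filter (fun c => i ∈ c),
          y c * ((1 - β) * marg f {x i} ((𝒩 i).image x)) =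
        ∑ c : Finset (Fin N), y c * ((1 - β) * ∑ i ∈ c, marg f {x i} ((𝒩 i).image x)) := by
      simp only [Finset.sum_filter]
      rw [Finset.sum_comm]
      refine Finset.sum_congr rfl fun c _ => ?_
      rw [Finset.sum_ite_mem, Finset.univ_inter]
      simp only [Finset.mul_sum]
    have h3 : ∑ c : Finset (Fin N), y c * ((1 - β) * ∑ i ∈ c, marg f {x i} ((𝒩 i).image x)) ≤
        ∑ c : Finset (Fin N), y c * f A := by
      refine Finset.sum_le_sum fun c _ => ?_
      by_cases hc : IsCommClique 𝒩 c
      · exact mul_le_mul_of_nonneg_left (hcliqueA c hc) (hy0 c)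
      · simp [hyclique c hc]
    calc (1 - β) * ∑ i : Fin N, marg f {x i} ((𝒩 i).image x) ≤ _ := h1
      _ = _ := h2
      _ ≤ ∑ c : Finset (Fin N), y c * f A := h3
      _ = (∑ c : Finset (Fin N), y c) * f A := by rw [← Finset.sum_mul]
  -- collate the chains
  have hc1 := chain1 N (le_refl N)
  have hc2 := chain2 N (le_refl N)
  rw [hFkN, ← hBdef] at hc1
  rw [hFkN, ← hAdef, Finset.union_comm B A] at hc2
  have hS12 : (∑ i : Fin N, (if xs i ∈ A then 0 else marg f {x i} ((𝒩 i).image x))) ≤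
      ∑ i : Fin N, (if x i ∈ B then 0 else marg f {x i} ((𝒩 i).image x)) := by
    refine Finset.sum_le_sum fun i _ => ?_
    by_cases h : xs i ∈ A
    · rw [if_pos h]
      split
      · exact le_refl _
      · exact hmargnn _ _
    · rw [if_neg h]
      have hxB : x i ∉ B := by
        intro hB
        rw [hBdef] at hB
        obtain ⟨l, _, hl⟩ := Finset.mem_image.mp hB
        have hli : l = i := hxsx l i hl
        rw [hli] at hl
        refine h ?_
        rw [hAdef, hl]
        exact Finset.mem_image_of_mem x (Finset.mem_univ i)
      rw [if_neg hxB]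
  have hS2S : (∑ i : Fin N, (if x i ∈ B then 0 else marg f {x i} ((𝒩 i).image x))) ≤
      ∑ i : Fin N, marg f {x i} ((𝒩 i).image x) := by
    refine Finset.sum_le_sum fun i _ => ?_
    split
    · exact hmargnn _ _
    · exact le_refl _
  have d2 := mul_le_mul_of_nonneg_left hc2 hβ'
  have d4 := mul_le_mul_of_nonneg_left hS12 hη0
  have d6 := mul_le_mul_of_nonneg_left hS2S hγ0
  have d7 : (1 - β) * f B ≤ (1 - β) * f A +
      (α + η - 1 + β - α * β) * ∑ i : Fin N, marg f {x i} ((𝒩 i).image x) := by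
    nlinarith [d2, hc1, d4, d6]
  have d8 := mul_le_mul_of_nonneg_left d7 hβ'
  have d9 := mul_le_mul_of_nonneg_left hcov hγ0
  have part1 : (1 - β) ^ 2 * f B ≤
      ((1 - β) ^ 2 + (α + η - 1 + β - α * β) * ∑ c : Finset (Fin N), y c) * f A := by
    nlinarith [d8, d9]
  refine ⟨part1, ?_⟩
  intro _ hpos
  have hD0 : (0:ℝ) ≤ (1 - β) ^ 2 + (α + η - 1 + β - α * β) * ∑ c : Finset (Fin N), y c := by
    have := mul_nonneg hγ0 hY0
    nlinarith [sq_nonneg (1 - β)]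
  rcases eq_or_lt_of_le hD0 with hD | hD
  · rw [← hD, div_zero]
    exact div_nonneg (hf0 A) (le_of_lt hpos)
  · rw [div_le_div_iff₀ hD hpos]
    linarith [part1]
end

section
/- Let f : 2^V → ℝ be a normalized set function on a finite ground set V and let α be a generalized curvature bound for f. Let (x_1,…,x_N) be a sequence of pairwise distinct elements of V and (x*_1,…,x*_N) a sequence of elements of V such that x_i ∉ {x*_1,…,x*_N} for every i, and write x = {x_1,…,x_N}, x* = {x*_1,…,x*_N}. Then f(x*) ≤ Σ_{i=1}^N Δ(x*_i | x*_{1:i−1} ∪ x) + α·Σ_{i=1}^N Δ(x_i | x_{1:i−1}). -/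
lemma iio_castSucc_image {V : Type*} [DecidableEq V] {N : ℕ} (y : Fin (N+1) → V) (i : Fin N) :
    (Finset.Iio i.castSucc).image y = (Finset.Iio i).image (y ∘ Fin.castSucc) := by
  ext v
  simp only [Finset.mem_image, Finset.mem_Iio, Function.comp, Fin.lt_def, Fin.coe_castSucc]
  constructor
  · rintro ⟨j, hj, rfl⟩
    exact ⟨⟨j.val, lt_trans hj i.isLt⟩, hj, by congr 1⟩
  · rintro ⟨j, hj, rfl⟩
    exact ⟨j.castSucc, hj, rfl⟩

lemma telescope {V : Type*} [DecidableEq V] (f : Finset V → ℝ) :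
    ∀ (N : ℕ) (y : Fin N → V) (Q : Finset V),
      ∑ i : Fin N, marg f {y i} ((Finset.Iio i).image y ∪ Q)
        = f (Finset.univ.image y ∪ Q) - f Q := by
  intro N
  induction N with
  | zero => intro y Q; simp [marg]
  | succ n ih =>
    intro y Q
    rw [Fin.sum_univ_castSucc]
    have h1 : ∀ i : Fin n, marg f {y i.castSucc} ((Finset.Iio i.castSucc).image y ∪ Q)
        = marg f {(y ∘ Fin.castSucc) i} ((Finset.Iio i).image (y ∘ Fin.castSucc) ∪ Q) := by
      intro i; rw [iio_castSucc_image]; rfl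
    simp only [h1]
    rw [ih (y ∘ Fin.castSucc) Q]
    have h2 : (Finset.Iio (Fin.last n)).image y = Finset.univ.image (y ∘ Fin.castSucc) := by
      ext v
      simp only [Finset.mem_image, Finset.mem_Iio, Finset.mem_univ, Function.comp,
        true_and, Fin.lt_def, Fin.val_last]
      constructor
      · rintro ⟨j, hj, rfl⟩
        exact ⟨⟨j.val, hj⟩, by congr 1⟩
      · rintro ⟨j, rfl⟩
        exact ⟨j.castSucc, j.isLt, rfl⟩
    have h3 : {y (Fin.last n)} ∪ Finset.univ.image (y ∘ Fin.castSucc)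
        = (Finset.univ : Finset (Fin (n+1))).image y := by
      ext v
      simp only [Finset.mem_union, Finset.mem_singleton, Finset.mem_image, Finset.mem_univ,
        true_and, Function.comp]
      constructor
      · rintro (rfl | ⟨j, rfl⟩)
        · exact ⟨Fin.last n, rfl⟩
        · exact ⟨j.castSucc, rfl⟩
      · rintro ⟨j, rfl⟩
        rcases Fin.eq_castSucc_or_eq_last j with ⟨j', rfl⟩ | rfl
        · exact Or.inr ⟨j', rfl⟩
        · exact Or.inl rfl
    rw [h2]
    unfold marg
    rw [← Finset.union_assoc, h3]
    ring

/-- For a normalized set function `f` with generalized curvature bound `α`, a sequence `x`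
of pairwise distinct elements, and a sequence `xs` with `x_i ∉ {xs_1,…,xs_N}` for all `i`,
`f(xs) ≤ Σ_i Δ(xs_i | xs_{1:i−1} ∪ x) + α·Σ_i Δ(x_i | x_{1:i−1})`. -/
theorem curvature_upper_bound
    {V : Type*} [DecidableEq V] [Fintype V] {N : ℕ}
    (f : Finset V → ℝ)
    (hnorm : f ∅ = 0)
    (α : ℝ)
    (hcurv : ∀ (S Q : Finset V) (v : V), v ∈ S \ Q →
      marg f {v} ((S ∪ Q).erase v) ≥ (1 - α) * marg f {v} (S.erase v))
    (x xs : Fin N → V)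
    (hxinj : Function.Injective x)
    (hdisj : ∀ i : Fin N, x i ∉ Finset.univ.image xs) :
    f (Finset.univ.image xs) ≤
      (∑ i : Fin N, marg f {xs i} ((Finset.Iio i).image xs ∪ Finset.univ.image x)) +
        α * ∑ i : Fin N, marg f {x i} ((Finset.Iio i).image x) := by
  set X := Finset.univ.image x with hX
  set XS := Finset.univ.image xs with hXS
  have t1 : ∑ i : Fin N, marg f {xs i} ((Finset.Iio i).image xs ∪ X)
      = f (XS ∪ X) - f X := telescope f N xs X
  have t2 : ∑ i : Fin N, marg f {x i} ((Finset.Iio i).image x) = f X := by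
    have := telescope f N x ∅
    simpa [hnorm] using this
  have t3 : ∑ i : Fin N, marg f {x i} ((Finset.Iio i).image x ∪ XS)
      = f (X ∪ XS) - f XS := telescope f N x XS
  -- curvature bound per term
  have key : ∀ i : Fin N, marg f {x i} ((Finset.Iio i).image x ∪ XS)
      ≥ (1 - α) * marg f {x i} ((Finset.Iio i).image x) := by
    intro i
    have hmem : x i ∈ (Finset.Iic i).image x \ XS := by
      simp only [Finset.mem_sdiff, Finset.mem_image, Finset.mem_Iic]
      exact ⟨⟨i, le_refl i, rfl⟩, hdisj i⟩
    have h := hcurv ((Finset.Iic i).image x) XS (x i) hmem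
    have e1 : ((Finset.Iic i).image x).erase (x i) = (Finset.Iio i).image x := by
      ext v
      simp only [Finset.mem_erase, Finset.mem_image, Finset.mem_Iic, Finset.mem_Iio]
      constructor
      · rintro ⟨hne, j, hj, rfl⟩
        exact ⟨j, lt_of_le_of_ne hj (fun h => hne (by rw [h])), rfl⟩
      · rintro ⟨j, hj, rfl⟩
        exact ⟨fun h => absurd (hxinj h) (ne_of_lt hj), j, le_of_lt hj, rfl⟩
    have e2 : ((Finset.Iic i).image x ∪ XS).erase (x i) = (Finset.Iio i).image x ∪ XS := by
      rw [Finset.erase_union_distrib, e1, Finset.erase_eq_of_notMem (hdisj i)]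
    rwa [e1, e2] at h
  have hsum : f (X ∪ XS) - f XS ≥ (1 - α) * f X := by
    rw [← t3, ← t2, Finset.mul_sum]
    exact Finset.sum_le_sum (fun i _ => key i)
  have hcomm : X ∪ XS = XS ∪ X := Finset.union_comm _ _
  rw [t1, t2]
  rw [hcomm] at hsum
  linarith
end

section
/- Let f : 2^V → ℝ be a set function on a finite ground set V and let β be an inverse generalized curvature bound for f. Let (x_1,…,x_N) be a sequence of elements of V with underlying set x = {x_1,…,x_N}, and let (x*_1,…,x*_N) be a sequence of pairwise distinct elements of V such that x*_i ∉ x for every i. Then (1−β)·Σ_{i=1}^N Δ(x*_i | x*_{1:i−1} ∪ x) ≤ Σ_{i=1}^N Δ(x*_i | x_{1:i−1}). -/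
/-- For a set function `f` with inverse generalized curvature bound `β`, a sequence `x`
with underlying set `{x_1,…,x_N}`, and a sequence `xs` of pairwise distinct elements
with `xs_i ∉ {x_1,…,x_N}` for all `i`,
`(1−β)·Σ_i Δ(xs_i | xs_{1:i−1} ∪ x) ≤ Σ_i Δ(xs_i | x_{1:i−1})`. -/
theorem inverse_curvature_bound
    {V : Type*} [DecidableEq V] [Fintype V] {N : ℕ}
    (f : Finset V → ℝ)
    (β : ℝ)
    (hinv : ∀ (S Q : Finset V) (v : V), v ∈ S \ Q →
      marg f {v} (S.erase v) ≥ (1 - β) * marg f {v} ((S.erase v) ∪ Q))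
    (x xs : Fin N → V)
    (hxsinj : Function.Injective xs)
    (hdisj : ∀ i : Fin N, xs i ∉ Finset.univ.image x) :
    (1 - β) * ∑ i : Fin N, marg f {xs i} ((Finset.Iio i).image xs ∪ Finset.univ.image x) ≤
      ∑ i : Fin N, marg f {xs i} ((Finset.Iio i).image x) := by
  rw [Finset.mul_sum]
  apply Finset.sum_le_sum
  intro i _
  have hnotx : xs i ∉ (Finset.Iio i).image x := fun h =>
    hdisj i (Finset.image_subset_image (Finset.subset_univ _) h)
  have hnotxs : xs i ∉ (Finset.Iio i).image xs := by
    intro h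
    obtain ⟨j, hj, hji⟩ := Finset.mem_image.mp h
    exact absurd (hxsinj hji) (by simpa using (Finset.mem_Iio.mp hj).ne)
  have hmem : xs i ∈ ({xs i} ∪ (Finset.Iio i).image x) \
      ((Finset.Iio i).image xs ∪ Finset.univ.image x) := by
    simp [hnotxs, hdisj i]
  have h := hinv ({xs i} ∪ (Finset.Iio i).image x)
      ((Finset.Iio i).image xs ∪ Finset.univ.image x) (xs i) hmem
  have herase : ({xs i} ∪ (Finset.Iio i).image x).erase (xs i) = (Finset.Iio i).image x := by
    rw [Finset.erase_union_distrib]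
    simp [Finset.erase_eq_of_notMem hnotx]
  rw [herase] at h
  have hsub : (Finset.Iio i).image x ∪ ((Finset.Iio i).image xs ∪ Finset.univ.image x) =
      (Finset.Iio i).image xs ∪ Finset.univ.image x := by
    apply Finset.union_eq_right.mpr
    exact (Finset.image_subset_image (Finset.subset_univ _)).trans Finset.subset_union_right
  rw [hsub] at h
  exact h
end

section
/- Let f : 2^V → ℝ be a normalized, monotone set function on a finite ground set V, let α ∈ [0,1] be a generalized curvature bound for f and β ∈ [0,1] an inverse generalized curvature bound for f, and let η ≥ 1. Suppose x = (x_1,…,x_N) is an η-optimal limited-information greedy joint solution with information sets N_1,…,N_N for the pairwise-disjoint choice sets X_1,…,X_N, and x* = (x*_1,…,x*_N) is any joint solution with x*_i ∈ X_i for each i. Then (1−β)·f({x*_1,…,x*_N}) ≤ (1−β)·f({x_1,…,x_N}) + (α + η − 1 + β − α·β)·Σ_{i=1}^N Δ(x_i | x_{N_i}). -/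
/-- Intermediate bound in the limited-information analysis: given a normalized monotone
set function `f` with generalized curvature bound `α ∈ [0,1]` and inverse generalized
curvature bound `β ∈ [0,1]`, an `η`-optimal limited-information greedy joint solution `x`
with information sets `𝒩 i ⊆ {j : j < i}` for pairwise disjoint choice sets `X i`, and
any joint solution `xs`,
`(1−β)·f(xs) ≤ (1−β)·f(x) + (α + η − 1 + β − αβ)·Σ_i Δ(x_i | x_{𝒩 i})`. -/
theorem limited_information_intermediate_bound
    {V : Type*} [DecidableEq V] [Fintype V] {N : ℕ}
    (f : Finset V → ℝ)
    (hnorm : f ∅ = 0)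
    (hmono : ∀ S Q : Finset V, S ⊆ Q → f S ≤ f Q)
    (α β η : ℝ) (hα0 : 0 ≤ α) (hα1 : α ≤ 1) (hβ0 : 0 ≤ β) (hβ1 : β ≤ 1)
    (hη : 1 ≤ η)
    (hcurv : ∀ (S Q : Finset V) (v : V), v ∈ S \ Q →
      marg f {v} ((S ∪ Q).erase v) ≥ (1 - α) * marg f {v} (S.erase v))
    (hinv : ∀ (S Q : Finset V) (v : V), v ∈ S \ Q →
      marg f {v} (S.erase v) ≥ (1 - β) * marg f {v} ((S.erase v) ∪ Q))
    (X : Fin N → Finset V)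
    (hXne : ∀ i, (X i).Nonempty)
    (hXdisj : ∀ i j, i ≠ j → Disjoint (X i) (X j))
    (𝒩 : Fin N → Finset (Fin N))
    (h𝒩 : ∀ i : Fin N, ∀ j ∈ 𝒩 i, j < i)
    (x xs : Fin N → V)
    (hx : ∀ i, x i ∈ X i) (hxs : ∀ i, xs i ∈ X i)
    (hgreedy : ∀ i : Fin N, ∀ xhat ∈ X i,
      η * marg f {x i} ((𝒩 i).image x) ≥ marg f {xhat} ((𝒩 i).image x)) :
    (1 - β) * f (Finset.univ.image xs) ≤
      (1 - β) * f (Finset.univ.image x) +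
        (α + η - 1 + β - α * β) * ∑ i : Fin N, marg f {x i} ((𝒩 i).image x) := by
  classical
  set S : Finset V := Finset.univ.image x with hSdef
  set T : Finset V := Finset.univ.image xs with hTdef
  set g : Fin N → ℝ := fun i => marg f {x i} ((𝒩 i).image x) with hgdef
  set h : Fin N → ℝ := fun i => if x i = xs i then 0 else g i with hhdef
  set filt : ℕ → Finset (Fin N) :=
    fun k => Finset.univ.filter (fun i : Fin N => (i : ℕ) < k) with hfiltdef
  set A : ℕ → Finset V := fun k => (filt k).image x with hAdef
  set D : ℕ → Finset V := fun k => (filt k).image xs with hDdef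
  -- distinctness facts
  have hxx : ∀ i j : Fin N, i ≠ j → x i ≠ x j := by
    intro i j hij he
    exact (Finset.disjoint_left.mp (hXdisj i j hij) (hx i)) (he ▸ hx j)
  have hxsxs : ∀ i j : Fin N, i ≠ j → xs i ≠ xs j := by
    intro i j hij he
    exact (Finset.disjoint_left.mp (hXdisj i j hij) (hxs i)) (he ▸ hxs j)
  have hxxs : ∀ i j : Fin N, i ≠ j → x i ≠ xs j := by
    intro i j hij he
    exact (Finset.disjoint_left.mp (hXdisj i j hij) (hx i)) (he ▸ hxs j)
  have hmargnn : ∀ (v : V) (Q : Finset V), 0 ≤ marg f {v} Q := by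
    intro v Q
    have := hmono Q ({v} ∪ Q) Finset.subset_union_right
    simp only [marg]
    linarith
  have hg0 : ∀ i, 0 ≤ g i := fun i => by rw [hgdef]; exact hmargnn _ _
  have hh0 : ∀ i, 0 ≤ h i := by
    intro i
    rw [hhdef]
    dsimp only
    split
    · exact le_refl 0
    · exact hg0 i
  have hhg : ∀ i, h i ≤ g i := by
    intro i
    rw [hhdef]
    dsimp only
    split
    · exact hg0 i
    · exact le_refl _
  -- filter facts
  have hfilt0 : filt 0 = ∅ := by
    rw [hfiltdef]; ext i; simp
  have hfiltsucc : ∀ (k : ℕ) (hk : k < N),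
      filt (k + 1) = insert (⟨k, hk⟩ : Fin N) (filt k) := by
    intro k hk
    rw [hfiltdef]
    ext i
    simp only [Finset.mem_filter, Finset.mem_univ, true_and, Finset.mem_insert, Fin.ext_iff]
    omega
  have hfiltN : filt N = Finset.univ := by
    rw [hfiltdef]; ext i; simp [i.isLt]
  have hnotinfilt : ∀ (k : ℕ) (hk : k < N), (⟨k, hk⟩ : Fin N) ∉ filt k := by
    intro k hk
    rw [hfiltdef]; simp
  -- set facts
  have hAS : ∀ k, A k ⊆ S := by
    intro k
    rw [hAdef, hSdef]
    exact Finset.image_subset_image (Finset.subset_univ _)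
  have h𝒩A : ∀ i : Fin N, (𝒩 i).image x ⊆ A (i : ℕ) := by
    intro i v hv
    rcases Finset.mem_image.mp hv with ⟨j, hj, hje⟩
    rw [hAdef]
    refine Finset.mem_image.mpr ⟨j, ?_, hje⟩
    rw [hfiltdef]
    simp only [Finset.mem_filter, Finset.mem_univ, true_and]
    exact h𝒩 i j hj
  have hxnotA : ∀ (k : ℕ) (hk : k < N), x ⟨k, hk⟩ ∉ A k := by
    intro k hk hmem
    rw [hAdef] at hmem
    rcases Finset.mem_image.mp hmem with ⟨j, hj, hje⟩
    rw [hfiltdef] at hj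
    simp only [Finset.mem_filter, Finset.mem_univ, true_and] at hj
    exact hxx j ⟨k, hk⟩ (by simp [Fin.ext_iff]; omega) hje
  have hxsnotD : ∀ (k : ℕ) (hk : k < N), xs ⟨k, hk⟩ ∉ D k := by
    intro k hk hmem
    rw [hDdef] at hmem
    rcases Finset.mem_image.mp hmem with ⟨j, hj, hje⟩
    rw [hfiltdef] at hj
    simp only [Finset.mem_filter, Finset.mem_univ, true_and] at hj
    exact hxsxs j ⟨k, hk⟩ (by simp [Fin.ext_iff]; omega) hje
  have hxnot𝒩 : ∀ i : Fin N, x i ∉ (𝒩 i).image x := by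
    intro i hmem
    rcases Finset.mem_image.mp hmem with ⟨j, hj, hje⟩
    exact hxx j i (Fin.ne_of_lt (h𝒩 i j hj)) hje
  have hxsnot𝒩 : ∀ i : Fin N, xs i ∉ (𝒩 i).image x := by
    intro i hmem
    rcases Finset.mem_image.mp hmem with ⟨j, hj, hje⟩
    exact hxxs j i (Fin.ne_of_lt (h𝒩 i j hj)) hje
  -- Lemma 1: f T + (1-α) Σ_{i<k} h i ≤ f (T ∪ A k)
  have L1 : ∀ k, k ≤ N → f T + (1 - α) * ∑ i ∈ filt k, h i ≤ f (T ∪ A k) := by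
    intro k
    induction k with
    | zero =>
      intro _
      rw [hfilt0, hAdef]
      simp [hfilt0]
    | succ k ih =>
      intro hk1
      have hk : k < N := hk1
      have ihk := ih (le_of_lt hk)
      set ik : Fin N := ⟨k, hk⟩ with hikdef
      have hA1 : A (k + 1) = insert (x ik) (A k) := by
        rw [hAdef]
        simp only
        rw [hfiltsucc k hk, Finset.image_insert]
      have hsum : ∑ i ∈ filt (k + 1), h i = h ik + ∑ i ∈ filt k, h i := by
        rw [hfiltsucc k hk, Finset.sum_insert (hnotinfilt k hk)]
      by_cases hmem : x ik ∈ T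
      · have hxeq : x ik = xs ik := by
          rw [hTdef] at hmem
          rcases Finset.mem_image.mp hmem with ⟨j, -, hje⟩
          by_cases hji : j = ik
          · rw [← hji] at hje ⊢; exact hje.symm
          · exact absurd hje.symm (hxxs ik j fun e => hji e.symm)
        have hhik : h ik = 0 := by rw [hhdef]; simp [hxeq]
        have hTA : T ∪ A (k + 1) = T ∪ A k := by
          rw [hA1, Finset.union_insert, Finset.insert_eq_self.mpr (Finset.mem_union_left _ hmem)]
        rw [hTA, hsum, hhik, zero_add]
        exact ihk
      · have hnotB : x ik ∉ T ∪ A k := by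
          intro hm
          rcases Finset.mem_union.mp hm with hm | hm
          · exact hmem hm
          · exact hxnotA k hk hm
        have hcv := hcurv (insert (x ik) ((𝒩 ik).image x)) (T ∪ A k) (x ik)
          (Finset.mem_sdiff.mpr ⟨Finset.mem_insert_self _ _, hnotB⟩)
        have e1 : (insert (x ik) ((𝒩 ik).image x)).erase (x ik) = (𝒩 ik).image x :=
          Finset.erase_insert (hxnot𝒩 ik)
        have e2 : ((insert (x ik) ((𝒩 ik).image x)) ∪ (T ∪ A k)).erase (x ik) = T ∪ A k := by
          rw [Finset.insert_union,
            Finset.union_eq_right.mpr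
              ((h𝒩A ik).trans Finset.subset_union_right),
            Finset.erase_insert hnotB]
        rw [e1, e2] at hcv
        have hBk1 : T ∪ A (k + 1) = insert (x ik) (T ∪ A k) := by
          rw [hA1, Finset.union_insert]
        have hmarg' : marg f {x ik} (T ∪ A k) = f (T ∪ A (k + 1)) - f (T ∪ A k) := by
          rw [hBk1, marg, Finset.insert_eq]
        have hhik : h ik = g ik := by
          have hne : x ik ≠ xs ik := fun e => hmem (e ▸ hTdef ▸ Finset.mem_image_of_mem xs (Finset.mem_univ ik))
          rw [hhdef]; simp [hne]
        rw [hsum, hhik]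
        have hgik : g ik = marg f {x ik} ((𝒩 ik).image x) := by rw [hgdef]
        rw [hgik] at *
        nlinarith [hcv, ihk, hmarg']
  -- Lemma 2: (1-β)(f (S ∪ D k) - f S) ≤ η Σ_{i<k} h i
  have L2 : ∀ k, k ≤ N → (1 - β) * (f (S ∪ D k) - f S) ≤ η * ∑ i ∈ filt k, h i := by
    intro k
    induction k with
    | zero =>
      intro _
      rw [hfilt0, hDdef]
      simp [hfilt0]
    | succ k ih =>
      intro hk1
      have hk : k < N := hk1
      have ihk := ih (le_of_lt hk)
      set ik : Fin N := ⟨k, hk⟩ with hikdef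
      have hD1 : D (k + 1) = insert (xs ik) (D k) := by
        rw [hDdef]
        simp only
        rw [hfiltsucc k hk, Finset.image_insert]
      have hsum : ∑ i ∈ filt (k + 1), h i = h ik + ∑ i ∈ filt k, h i := by
        rw [hfiltsucc k hk, Finset.sum_insert (hnotinfilt k hk)]
      by_cases hmem : xs ik ∈ S ∪ D k
      · have hSD : S ∪ D (k + 1) = S ∪ D k := by
          rw [hD1, Finset.union_insert, Finset.insert_eq_self.mpr hmem]
        rw [hSD, hsum]
        have h1 : 0 ≤ η * h ik := mul_nonneg (by linarith) (hh0 ik)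
        nlinarith [ihk]
      · have hiv := hinv (insert (xs ik) ((𝒩 ik).image x)) (S ∪ D k) (xs ik)
          (Finset.mem_sdiff.mpr ⟨Finset.mem_insert_self _ _, hmem⟩)
        have e1 : (insert (xs ik) ((𝒩 ik).image x)).erase (xs ik) = (𝒩 ik).image x :=
          Finset.erase_insert (hxsnot𝒩 ik)
        have e2 : ((𝒩 ik).image x) ∪ (S ∪ D k) = S ∪ D k :=
          Finset.union_eq_right.mpr
            ((h𝒩A ik).trans ((hAS (ik : ℕ)).trans Finset.subset_union_left))
        rw [e1, e2] at hiv
        have hgr := hgreedy ik (xs ik) (hxs ik)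
        have hCk1 : S ∪ D (k + 1) = insert (xs ik) (S ∪ D k) := by
          rw [hD1, Finset.union_insert]
        have hmarg' : marg f {xs ik} (S ∪ D k) = f (S ∪ D (k + 1)) - f (S ∪ D k) := by
          rw [hCk1, marg, Finset.insert_eq]
        have hhik : h ik = g ik := by
          have hne : x ik ≠ xs ik := by
            intro e
            exact hmem (Finset.mem_union_left _ (e ▸ hSdef ▸ Finset.mem_image_of_mem x (Finset.mem_univ ik)))
          rw [hhdef]; simp [hne]
        rw [hsum, hhik]
        have hgik : g ik = marg f {x ik} ((𝒩 ik).image x) := by rw [hgdef]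
        rw [hgik] at *
        nlinarith [hiv, hgr, ihk, hmarg']
  -- combine
  have hAN : A N = S := by
    rw [hAdef]
    simp only
    rw [hfiltN, hSdef]
  have hDN : D N = T := by
    rw [hDdef]
    simp only
    rw [hfiltN, hTdef]
  have E1 := L1 N le_rfl
  have E2 := L2 N le_rfl
  rw [hfiltN, hAN, Finset.union_comm] at E1
  rw [hfiltN, hDN] at E2
  have hSum : ∑ i, h i ≤ ∑ i, g i := Finset.sum_le_sum fun i _ => hhg i
  have hc : 0 ≤ α + η - 1 + β - α * β := by
    nlinarith [mul_nonneg hβ0 (show (0:ℝ) ≤ 1 - α by linarith)]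
  have E1' := mul_le_mul_of_nonneg_left E1 (show (0:ℝ) ≤ 1 - β by linarith)
  have E3 := mul_le_mul_of_nonneg_left hSum hc
  nlinarith [E1', E2, E3]
end

section
/- Let f : 2^V → ℝ be a normalized, monotone set function on a finite ground set V and let β be an inverse generalized curvature bound for f. Let (x_1,…,x_N) be pairwise distinct elements of V and let N_1,…,N_N with N_i ⊆ {1,…,i−1} be information sets. If c ⊆ {1,…,N} is a clique of the communication graph, then (1−β)·Σ_{i ∈ c} Δ(x_i | x_{N_i}) ≤ f({x_i : i ∈ c}) ≤ f({x_1,…,x_N}). -/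
def IsInvCurvatureBound {V : Type*} [DecidableEq V] (f : Finset V → ℝ) (β : ℝ) : Prop :=
  ∀ (S Q : Finset V) (v : V), v ∈ S \ Q →
    marg f {v} (S.erase v) ≥ (1 - β) * marg f {v} ((S.erase v) ∪ Q)

theorem IsInvCurvatureBound.mul_marg_le_marg {V : Type*} [DecidableEq V] {f : Finset V → ℝ}
    {β : ℝ} (hβ : IsInvCurvatureBound f β) {P Q : Finset V} {v : V} (hPQ : P ⊆ Q)
    (hvQ : v ∉ Q) : (1 - β) * marg f {v} Q ≤ marg f {v} P := by
  have hvP : v ∉ P := fun h => hvQ (hPQ h)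
  have h := hβ (insert v P) Q v (by simp [hvQ])
  rwa [Finset.erase_insert hvP, Finset.union_eq_right.2 hPQ] at h

theorem sum_marg_filter_lt_eq {ι V : Type*} [LinearOrder ι] [DecidableEq V]
    {f : Finset V → ℝ} (hf : f ∅ = 0) (x : ι → V) (c : Finset ι) :
    ∑ i ∈ c, marg f {x i} ((c.filter (· < i)).image x) = f (c.image x) := by
  induction c using Finset.induction_on_max with
  | empty => simpa using hf.symm
  | insert a s ha ih =>
    have has : a ∉ s := fun h => lt_irrefl a (ha a h)
    have hpred_a : (insert a s).filter (· < a) = s := by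
      rw [Finset.filter_insert, if_neg (lt_irrefl a)]
      exact Finset.filter_true_of_mem ha
    have hpred_s : ∀ i ∈ s, (insert a s).filter (· < i) = s.filter (· < i) := fun i hi => by
      rw [Finset.filter_insert, if_neg (not_lt.2 (ha i hi).le)]
    rw [Finset.sum_insert has, hpred_a, Finset.sum_congr rfl fun i hi => by rw [hpred_s i hi], ih,
      Finset.image_insert, marg, ← Finset.insert_eq]
    ring

theorem clique_inverse_curvature_bound_general
    {V : Type*} [DecidableEq V] {N : ℕ}
    (f : Finset V → ℝ)
    (hnorm : f ∅ = 0)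
    (hmono : ∀ S Q : Finset V, S ⊆ Q → f S ≤ f Q)
    (β : ℝ)
    (hinv : ∀ (S Q : Finset V) (v : V), v ∈ S \ Q →
      marg f {v} (S.erase v) ≥ (1 - β) * marg f {v} ((S.erase v) ∪ Q))
    (x : Fin N → V)
    (hxinj : Function.Injective x)
    (𝒩 : Fin N → Finset (Fin N))
    (h𝒩 : ∀ i : Fin N, ∀ j ∈ 𝒩 i, j < i)
    (c : Finset (Fin N))
    (hc : IsCommClique 𝒩 c) :
    (1 - β) * ∑ i ∈ c, marg f {x i} ((𝒩 i).image x) ≤ f (c.image x) ∧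
      f (c.image x) ≤ f (Finset.univ.image x) := by
  refine ⟨?_, hmono _ _ (Finset.image_subset_image (Finset.subset_univ c))⟩
  rw [← sum_marg_filter_lt_eq hnorm x c, Finset.mul_sum]
  refine Finset.sum_le_sum fun i hi => IsInvCurvatureBound.mul_marg_le_marg hinv ?_ ?_
  · exact Finset.image_subset_image fun j hj =>
      hc i hi j (Finset.mem_filter.1 hj).1 (Finset.mem_filter.1 hj).2
  · rw [hxinj.mem_finset_image]
    exact fun hi𝒩 => lt_irrefl i (h𝒩 i i hi𝒩)

/-- For a normalized monotone set function `f` with inverse generalized curvature bound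
`β`, pairwise distinct elements `x_1,…,x_N`, information sets `𝒩 i ⊆ {j : j < i}`, and
any clique `c` of the communication graph,
`(1−β)·Σ_{i ∈ c} Δ(x_i | x_{𝒩 i}) ≤ f({x_i : i ∈ c}) ≤ f({x_1,…,x_N})`. -/
theorem clique_inverse_curvature_bound
    {V : Type*} [DecidableEq V] [Fintype V] {N : ℕ}
    (f : Finset V → ℝ)
    (hnorm : f ∅ = 0)
    (hmono : ∀ S Q : Finset V, S ⊆ Q → f S ≤ f Q)
    (β : ℝ)
    (hinv : ∀ (S Q : Finset V) (v : V), v ∈ S \ Q →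
      marg f {v} (S.erase v) ≥ (1 - β) * marg f {v} ((S.erase v) ∪ Q))
    (x : Fin N → V)
    (hxinj : Function.Injective x)
    (𝒩 : Fin N → Finset (Fin N))
    (h𝒩 : ∀ i : Fin N, ∀ j ∈ 𝒩 i, j < i)
    (c : Finset (Fin N))
    (hc : IsCommClique 𝒩 c) :
    (1 - β) * ∑ i ∈ c, marg f {x i} ((𝒩 i).image x) ≤ f (c.image x) ∧
      f (c.image x) ≤ f (Finset.univ.image x) :=
  clique_inverse_curvature_bound_general f hnorm hmono β hinv x hxinj 𝒩 h𝒩 c hc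
end

section
/- Let T, E, Z, Y be finite nonempty sets, let π_T : T → ℝ≥0 and π_E : E → ℝ≥0 be priors with Σ_{t∈T} π_T(t) = 1 and Σ_{e∈E} π_E(e) = 1, let q : T × E × Z → ℝ≥0 satisfy Σ_{z∈Z} q(t,e,z) = 1 for all t, e, let ρ : E × Y → ℝ≥0 satisfy Σ_{y∈Y} ρ(e,y) = 1 for all e, and let L : T × T → ℝ≥0 be a loss function. For k ≥ 0 define the joint measurement weight w_k(t, z, y) = Σ_{e∈E} π_T(t)·π_E(e)·∏_{j=1}^{k} q(t,e,z_j)·ρ(e,y_j) for z = (z_1,…,z_k) ∈ Z^k and y = (y_1,…,y_k) ∈ Y^k, and the anticipated risk r(k) = Σ_{z ∈ Z^k} Σ_{y ∈ Y^k} min_{δ ∈ T} Σ_{t ∈ T} w_k(t,z,y)·L(t,δ). Then r(k) ≤ r(k−1) for every k ≥ 1; consequently, the benefit of search f(k) := r(0) − r(k) satisfies f(0) = 0 and is monotone nondecreasing in k. -/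
/-- The anticipated risk `r(k)` after `k` search passes: the expected (over measurement
sequences `z ∈ Z^k`, `y ∈ Y^k`, weighted by the unnormalized joint weight
`w_k(t,z,y) = Σ_e π_T(t)·π_E(e)·∏_j q(t,e,z_j)·ρ(e,y_j)`) minimal posterior expected
loss of the Bayes estimate `δ ∈ T`. -/
noncomputable def anticipatedRisk
    {T E Z Y : Type*} [Fintype T] [Fintype E] [Fintype Z] [Fintype Y] [Nonempty T]
    (piT : T → ℝ) (piE : E → ℝ) (q : T → E → Z → ℝ) (ρ : E → Y → ℝ)
    (L : T → T → ℝ) (k : ℕ) : ℝ :=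
  ∑ z : Fin k → Z, ∑ y : Fin k → Y,
    Finset.univ.inf' Finset.univ_nonempty (fun δ : T =>
      ∑ t : T, (∑ e : E, piT t * piE e * ∏ j : Fin k, q t e (z j) * ρ e (y j)) * L t δ)

/-- Splitting a sum over `Fin (k+1) → Z` into the first coordinate and the tail. -/
lemma benefitAux_sum_pi_succ {Z : Type*} [Fintype Z] {k : ℕ} (F : (Fin (k+1) → Z) → ℝ) :
    ∑ z : Fin (k+1) → Z, F z = ∑ z0 : Z, ∑ z : Fin k → Z, F (Fin.cons z0 z) := by
  rw [← (Fin.consEquiv (fun _ : Fin (k+1) => Z)).sum_comp F, Fintype.sum_prod_type]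
  rfl

/-- Marginalizing out a pair of unit-sum factors. -/
lemma benefitAux_marg1 {Z Y : Type*} [Fintype Z] [Fintype Y] (f : Z → ℝ) (g : Y → ℝ) (C : ℝ)
    (hf : ∑ z : Z, f z = 1) (hg : ∑ y : Y, g y = 1) :
    ∑ z : Z, ∑ y : Y, f z * g y * C = C := by
  simp only [mul_assoc, ← Finset.mul_sum, ← Finset.sum_mul, hf, hg, one_mul]

/-- Reordering a fourfold sum `(a,b,c,d) ↦ (b,d,a,c)`. -/
lemma benefitAux_reorder {α β γ δ : Type*} [Fintype α] [Fintype β] [Fintype γ] [Fintype δ]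
    (f : α → β → γ → δ → ℝ) :
    ∑ a : α, ∑ b : β, ∑ c : γ, ∑ d : δ, f a b c d
      = ∑ b : β, ∑ d : δ, ∑ a : α, ∑ c : γ, f a b c d := by
  rw [Finset.sum_comm]
  refine Finset.sum_congr rfl fun b _ => ?_
  calc ∑ a : α, ∑ c : γ, ∑ d : δ, f a b c d
      = ∑ a : α, ∑ d : δ, ∑ c : γ, f a b c d :=
        Finset.sum_congr rfl fun a _ => Finset.sum_comm
    _ = ∑ d : δ, ∑ a : α, ∑ c : γ, f a b c d := Finset.sum_comm

/-- Reordering a fourfold sum `(a,b,c,d) ↦ (c,d,a,b)`. -/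
lemma benefitAux_reorder' {α β γ δ : Type*} [Fintype α] [Fintype β] [Fintype γ] [Fintype δ]
    (f : α → β → γ → δ → ℝ) :
    ∑ a : α, ∑ b : β, ∑ c : γ, ∑ d : δ, f a b c d
      = ∑ c : γ, ∑ d : δ, ∑ a : α, ∑ b : β, f a b c d := by
  calc ∑ a : α, ∑ b : β, ∑ c : γ, ∑ d : δ, f a b c d
      = ∑ a : α, ∑ c : γ, ∑ b : β, ∑ d : δ, f a b c d :=
        Finset.sum_congr rfl fun a _ => Finset.sum_comm
    _ = ∑ c : γ, ∑ a : α, ∑ b : β, ∑ d : δ, f a b c d := Finset.sum_comm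
    _ = ∑ c : γ, ∑ d : δ, ∑ a : α, ∑ b : β, f a b c d := by
        refine Finset.sum_congr rfl fun c _ => ?_
        calc ∑ a : α, ∑ b : β, ∑ d : δ, f a b c d
            = ∑ a : α, ∑ d : δ, ∑ b : β, f a b c d :=
              Finset.sum_congr rfl fun a _ => Finset.sum_comm
          _ = ∑ d : δ, ∑ a : α, ∑ b : β, f a b c d := Finset.sum_comm

/-- Marginalization of the posterior expected loss: summing the `(k+1)`-pass expected
loss over the extra measurement pair recovers the `k`-pass expected loss. -/
lemma benefitAux_marg
    {T E Z Y : Type*} [Fintype T] [Fintype E] [Fintype Z] [Fintype Y]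
    (piT : T → ℝ) (piE : E → ℝ) (q : T → E → Z → ℝ) (ρ : E → Y → ℝ) (L : T → T → ℝ)
    (hq1 : ∀ t e, ∑ z : Z, q t e z = 1)
    (hρ1 : ∀ e, ∑ y : Y, ρ e y = 1) (k : ℕ)
    (z : Fin k → Z) (y : Fin k → Y) (δ : T) :
    ∑ z0 : Z, ∑ y0 : Y, ∑ t : T,
      (∑ e : E, piT t * piE e * ∏ j : Fin (k+1),
        q t e ((Fin.cons z0 z : Fin (k+1) → Z) j) * ρ e ((Fin.cons y0 y : Fin (k+1) → Y) j)) * L t δ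
    = ∑ t : T, (∑ e : E, piT t * piE e * ∏ j : Fin k, q t e (z j) * ρ e (y j)) * L t δ := by
  simp only [Fin.prod_univ_succ, Fin.cons_zero, Fin.cons_succ, Finset.sum_mul]
  rw [benefitAux_reorder' (f := fun (z0 : Z) (y0 : Y) (t : T) (e : E) =>
    piT t * piE e * (q t e z0 * ρ e y0 * ∏ j : Fin k, q t e (z j) * ρ e (y j)) * L t δ)]
  refine Finset.sum_congr rfl fun t _ => Finset.sum_congr rfl fun e _ => ?_
  have := benefitAux_marg1 (q t e) (ρ e)
    (piT t * piE e * (∏ j : Fin k, q t e (z j) * ρ e (y j)) * L t δ) (hq1 t e) (hρ1 e)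
  rw [← this]
  exact Finset.sum_congr rfl fun z0 _ => Finset.sum_congr rfl fun y0 _ => by ring

/-- One-step monotonicity of the anticipated risk. -/
lemma benefitAux_step
    {T E Z Y : Type*} [Fintype T] [Fintype E] [Fintype Z] [Fintype Y]
    [Nonempty T] [Nonempty E] [Nonempty Z] [Nonempty Y]
    (piT : T → ℝ) (piE : E → ℝ) (q : T → E → Z → ℝ) (ρ : E → Y → ℝ) (L : T → T → ℝ)
    (hq1 : ∀ t e, ∑ z : Z, q t e z = 1)
    (hρ1 : ∀ e, ∑ y : Y, ρ e y = 1) (k : ℕ) :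
    anticipatedRisk piT piE q ρ L (k + 1) ≤ anticipatedRisk piT piE q ρ L k := by
  unfold anticipatedRisk
  rw [benefitAux_sum_pi_succ]
  simp only [benefitAux_sum_pi_succ]
  rw [benefitAux_reorder (f := fun (z0 : Z) (z : Fin k → Z) (y0 : Y) (y : Fin k → Y) =>
    Finset.univ.inf' Finset.univ_nonempty (fun δ : T =>
      ∑ t : T, (∑ e : E, piT t * piE e * ∏ j : Fin (k+1),
        q t e ((Fin.cons z0 z : Fin (k+1) → Z) j)
          * ρ e ((Fin.cons y0 y : Fin (k+1) → Y) j)) * L t δ))]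
  refine Finset.sum_le_sum fun z _ => Finset.sum_le_sum fun y _ => ?_
  refine Finset.le_inf' _ _ fun δ _ => ?_
  calc ∑ z0 : Z, ∑ y0 : Y,
        Finset.univ.inf' Finset.univ_nonempty (fun δ' : T =>
          ∑ t : T, (∑ e : E, piT t * piE e * ∏ j : Fin (k+1),
            q t e ((Fin.cons z0 z : Fin (k+1) → Z) j)
              * ρ e ((Fin.cons y0 y : Fin (k+1) → Y) j)) * L t δ')
      ≤ ∑ z0 : Z, ∑ y0 : Y,
          ∑ t : T, (∑ e : E, piT t * piE e * ∏ j : Fin (k+1),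
            q t e ((Fin.cons z0 z : Fin (k+1) → Z) j)
              * ρ e ((Fin.cons y0 y : Fin (k+1) → Y) j)) * L t δ :=
        Finset.sum_le_sum fun z0 _ => Finset.sum_le_sum fun y0 _ =>
          Finset.inf'_le _ (Finset.mem_univ δ)
    _ = ∑ t : T, (∑ e : E, piT t * piE e * ∏ j : Fin k, q t e (z j) * ρ e (y j)) * L t δ :=
        benefitAux_marg piT piE q ρ L hq1 hρ1 k z y δ

/-- **Monotonicity of the benefit of search.** With independent priors `π_T, π_E`,
per-pass measurement likelihoods `q(t,e,·)` and `ρ(e,·)` (each summing to one), and a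
nonnegative loss `L`, the anticipated risk satisfies `r(k) ≤ r(k−1)` for every `k ≥ 1`;
consequently the benefit of search `f(k) = r(0) − r(k)` is normalized (`f(0) = 0`) and
monotone nondecreasing in `k`. -/
theorem benefit_of_search_monotone
    {T E Z Y : Type*} [Fintype T] [Fintype E] [Fintype Z] [Fintype Y]
    [Nonempty T] [Nonempty E] [Nonempty Z] [Nonempty Y]
    (piT : T → ℝ) (piE : E → ℝ) (q : T → E → Z → ℝ) (ρ : E → Y → ℝ) (L : T → T → ℝ)
    (hpiT0 : ∀ t, 0 ≤ piT t) (hpiT1 : ∑ t : T, piT t = 1)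
    (hpiE0 : ∀ e, 0 ≤ piE e) (hpiE1 : ∑ e : E, piE e = 1)
    (hq0 : ∀ t e z, 0 ≤ q t e z) (hq1 : ∀ t e, ∑ z : Z, q t e z = 1)
    (hρ0 : ∀ e y, 0 ≤ ρ e y) (hρ1 : ∀ e, ∑ y : Y, ρ e y = 1)
    (hL : ∀ t δ, 0 ≤ L t δ) :
    (∀ k : ℕ, 1 ≤ k →
        anticipatedRisk piT piE q ρ L k ≤ anticipatedRisk piT piE q ρ L (k - 1)) ∧
      anticipatedRisk piT piE q ρ L 0 - anticipatedRisk piT piE q ρ L 0 = 0 ∧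
      Monotone (fun k : ℕ =>
        anticipatedRisk piT piE q ρ L 0 - anticipatedRisk piT piE q ρ L k) := by
  refine ⟨fun k hk => ?_, sub_self _, monotone_nat_of_le_succ fun n => ?_⟩
  · obtain ⟨m, rfl⟩ := Nat.exists_eq_add_of_le hk
    simpa [Nat.add_comm] using benefitAux_step piT piE q ρ L hq1 hρ1 m
  · exact sub_le_sub_left (benefitAux_step piT piE q ρ L hq1 hρ1 n) _
end
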